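/- arXiv:2109.04850 — 4 statements merged into one kernel-verified Lean document; each statement's English description precedes it below -/
import Mathlib

section
/- For an odd integer m ≥ 2, an integer n coprime to m, and any integer c, the Euler quotient satisfies Q_m(n + c·m) ≡ Q_m(n) + c·n^{−1}·φ(m) (mod m), where n^{−1} denotes the inverse of n modulo m. -/
/-! Modulo `m²`, `(n + c m)^k ≡ n^k + k n^(k-1) c m`; dividing by `m` turns this into a congruence
modulo `m` between the quotients `((n + c m)^k - 1)/m` and `(n^k - 1)/m`. For `k = φ(m)`, Euler's
theorem makes `n^(k-1)` the inverse of `n` modulo `m`. -/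

/-- The Euler quotient `Q_m(n) = ((n^φ(m) - 1)/m) mod m` for `gcd(n,m) = 1`,
and `0` otherwise. -/
def eulerQuotient (m : ℕ) (n : ℤ) : ℤ :=
  if Int.gcd n m = 1 then ((n ^ Nat.totient m - 1) / (m : ℤ)) % (m : ℤ) else 0

open Nat

theorem IsCoprime.isUnit_intCast_zmod {x : ℤ} {n : ℕ} (h : IsCoprime x n) : IsUnit (x : ZMod n) := by
  simpa [isCoprime_zero_right] using h.map (Int.castRingHom (ZMod n))

theorem Int.ModEq.pow_totient {x : ℤ} {n : ℕ} (h : IsCoprime x n) : x ^ φ n ≡ 1 [ZMOD n] := by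
  obtain ⟨v, hv⟩ := h.isUnit_intCast_zmod
  rw [← ZMod.intCast_eq_intCast_iff, Int.cast_pow, ← hv, ← Units.val_pow_eq_pow_val,
    ZMod.pow_totient, Units.val_one, Int.cast_one]

theorem Int.ModEq.pow_pred_of_mul_modEq_one {m x u : ℤ} {k : ℕ} (hk : k ≠ 0)
    (hpow : x ^ k ≡ 1 [ZMOD m]) (hu : x * u ≡ 1 [ZMOD m]) : x ^ (k - 1) ≡ u [ZMOD m] :=
  calc x ^ (k - 1) ≡ x ^ (k - 1) * (x * u) [ZMOD m] := by simpa using hu.symm.mul_left _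
    _ = x ^ k * u := by rw [← mul_assoc, ← pow_succ, Nat.sub_add_cancel (by omega)]
    _ ≡ u [ZMOD m] := by simpa using hpow.mul_right u

theorem Int.ediv_add_mul_pow_sub_one_modEq {m : ℤ} (hm : m ≠ 0) {n : ℤ} (c : ℤ) {k : ℕ}
    (h : m ∣ n ^ k - 1) :
    ((n + c * m) ^ k - 1) / m ≡ (n ^ k - 1) / m + c * k * n ^ (k - 1) [ZMOD m] := by
  obtain ⟨q, hq⟩ := h
  obtain ⟨E, hE⟩ := sq_dvd_add_pow_sub_sub (c * m) n k
  have hexpand : (n + c * m) ^ k - 1 = m * (q + c * k * n ^ (k - 1) + m * (c ^ 2 * E)) := by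
    linear_combination hE + hq
  rw [hexpand, hq, Int.mul_ediv_cancel_left _ hm, Int.mul_ediv_cancel_left _ hm]
  exact Int.modEq_iff_dvd.mpr ⟨-(c ^ 2 * E), by ring⟩

theorem eulerQuotient_modEq {m : ℕ} {n : ℤ} (hn : Int.gcd n m = 1) :
    eulerQuotient m n ≡ (n ^ φ m - 1) / m [ZMOD m] := by
  rw [eulerQuotient, if_pos hn]
  exact Int.mod_modEq _ _

theorem eulerQuotient_add_mul_general (m : ℕ) (hm : 2 ≤ m) (n c u : ℤ)
    (hn : Int.gcd n m = 1) (hu : n * u ≡ 1 [ZMOD m]) :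
    eulerQuotient m (n + c * m) ≡ eulerQuotient m n + c * u * (Nat.totient m : ℤ) [ZMOD m] := by
  have hcop : IsCoprime n m := Int.isCoprime_iff_gcd_eq_one.mpr hn
  have hshift : Int.gcd (n + c * m) m = 1 :=
    Int.isCoprime_iff_gcd_eq_one.mp (hcop.add_mul_right_left c)
  have heuler : n ^ φ m ≡ 1 [ZMOD m] := Int.ModEq.pow_totient hcop
  have hinv : n ^ (φ m - 1) ≡ u [ZMOD m] :=
    heuler.pow_pred_of_mul_modEq_one (Nat.totient_pos.mpr (by omega)).ne' hu
  calc eulerQuotient m (n + c * m)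
      ≡ ((n + c * m) ^ φ m - 1) / m [ZMOD m] := eulerQuotient_modEq hshift
    _ ≡ (n ^ φ m - 1) / m + c * φ m * n ^ (φ m - 1) [ZMOD m] :=
      Int.ediv_add_mul_pow_sub_one_modEq (by omega) c heuler.symm.dvd
    _ ≡ eulerQuotient m n + c * u * φ m [ZMOD m] := by
      rw [mul_right_comm c]
      exact (eulerQuotient_modEq hn).symm.add ((hinv.mul_left c).mul_right _)

theorem eulerQuotient_add_mul (m : ℕ) (hm : 2 ≤ m) (hodd : Odd m) (n c u : ℤ)
    (hn : Int.gcd n m = 1) (hu : n * u ≡ 1 [ZMOD m]) :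
    eulerQuotient m (n + c * m) ≡ eulerQuotient m n + c * u * (Nat.totient m : ℤ) [ZMOD m] :=
  eulerQuotient_add_mul_general m hm n c u hn hu
end

section
/- Let m ≥ 2 be an odd integer. The number of triples (l1, l2, l4) with (m+1)/2 ≤ l1, l2, l4 ≤ m−1 and 3·l2 ≡ 2·l1 + l4 (mod m) equals m²/8 + O(m), i.e., differs from m²/8 by at most C·m for an absolute constant C. -/
open Finset

private lemma inner_filter_eq (K l2 tv : ℤ) :
    (Finset.Icc (K+1) (2*K)).filter
      (fun l1 => K+1 ≤ 3*l2-2*l1+tv ∧ 3*l2-2*l1+tv ≤ 2*K)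
      = Finset.Icc (max (K+1) ((3*l2+tv-2*K+1)/2)) (min (2*K) ((3*l2+tv-K-1)/2)) := by
  ext x
  simp only [mem_filter, mem_Icc]
  omega

private lemma Nt_eq (K tv : ℤ) :
    ((((Finset.Icc (K+1) (2*K)) ×ˢ (Finset.Icc (K+1) (2*K)) ×ˢ (Finset.Icc (K+1) (2*K))).filter
      (fun l => 2*l.1 + l.2.2 - 3*l.2.1 = tv)).card : ℤ)
    = ∑ l2 ∈ Finset.Icc (K+1) (2*K),
        (((Finset.Icc (max (K+1) ((3*l2+tv-2*K+1)/2))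
            (min (2*K) ((3*l2+tv-K-1)/2))).card : ℤ)) := by
  rw [Finset.card_filter]
  push_cast
  simp only [Finset.sum_product]
  rw [Finset.sum_comm]
  refine Finset.sum_congr rfl (fun l2 _ => ?_)
  have inner : ∀ l1 : ℤ, (∑ l4 ∈ Finset.Icc (K+1) (2*K),
      (if 2*l1+l4-3*l2 = tv then (1:ℤ) else 0))
      = if K+1 ≤ 3*l2-2*l1+tv ∧ 3*l2-2*l1+tv ≤ 2*K then 1 else 0 := by
    intro l1
    have he : ∀ l4 : ℤ, (2*l1+l4-3*l2 = tv) ↔ (l4 = 3*l2-2*l1+tv) := by intro l4; omega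
    simp only [he]
    rw [Finset.sum_ite_eq' (Finset.Icc (K+1) (2*K)) (3*l2-2*l1+tv) (fun _ => (1:ℤ))]
    simp [mem_Icc]
  simp only [inner]
  rw [Finset.sum_boole, ← inner_filter_eq K l2 tv]

private lemma perl2 (K l2 : ℤ) (hK : 1 ≤ K) (h1 : K+1 ≤ l2) (h2 : l2 ≤ 2*K) :
    K - 4 ≤ 2*(((Finset.Icc (max (K+1) ((3*l2+(-(2*K+1))-2*K+1)/2)) (min (2*K) ((3*l2+(-(2*K+1))-K-1)/2))).card : ℤ)
        + ((Finset.Icc (max (K+1) ((3*l2+0-2*K+1)/2)) (min (2*K) ((3*l2+0-K-1)/2))).card : ℤ)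
        + ((Finset.Icc (max (K+1) ((3*l2+(2*K+1)-2*K+1)/2)) (min (2*K) ((3*l2+(2*K+1)-K-1)/2))).card : ℤ))
    ∧ 2*(((Finset.Icc (max (K+1) ((3*l2+(-(2*K+1))-2*K+1)/2)) (min (2*K) ((3*l2+(-(2*K+1))-K-1)/2))).card : ℤ)
        + ((Finset.Icc (max (K+1) ((3*l2+0-2*K+1)/2)) (min (2*K) ((3*l2+0-K-1)/2))).card : ℤ)
        + ((Finset.Icc (max (K+1) ((3*l2+(2*K+1)-2*K+1)/2)) (min (2*K) ((3*l2+(2*K+1)-K-1)/2))).card : ℤ))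
      ≤ K + 4 := by
  simp only [Int.card_Icc]
  omega

private lemma aux_bounds (K : ℤ) (hK : 1 ≤ K) :
    K*K - 4*K ≤ 2*((((Finset.Icc (K+1) (2*K)) ×ˢ (Finset.Icc (K+1) (2*K)) ×ˢ (Finset.Icc (K+1) (2*K))).filter
        (fun l => (2*K+1) ∣ (2*l.1 + l.2.2 - 3*l.2.1))).card : ℤ)
    ∧ 2*((((Finset.Icc (K+1) (2*K)) ×ˢ (Finset.Icc (K+1) (2*K)) ×ˢ (Finset.Icc (K+1) (2*K))).filter
        (fun l => (2*K+1) ∣ (2*l.1 + l.2.2 - 3*l.2.1))).card : ℤ) ≤ K*K + 4*K := by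
  set D := Finset.Icc (K+1) (2*K) with hD
  have hiff : ∀ l ∈ D ×ˢ D ×ˢ D, ((2*K+1) ∣ (2*l.1 + l.2.2 - 3*l.2.1)) ↔
      (2*l.1 + l.2.2 - 3*l.2.1 = -(2*K+1) ∨ 2*l.1 + l.2.2 - 3*l.2.1 = 0 ∨
       2*l.1 + l.2.2 - 3*l.2.1 = 2*K+1) := by
    rintro ⟨l1, l2, l4⟩ hl
    simp only [hD, mem_product, mem_Icc] at hl
    obtain ⟨⟨ha1, ha2⟩, ⟨hb1, hb2⟩, ⟨hc1, hc2⟩⟩ := hl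
    constructor
    · rintro ⟨t, ht⟩
      simp only at ht ⊢
      have hx1 : 2*l1 + l4 - 3*l2 ≤ 3*K - 3 := by omega
      have hx2 : -(3*K) + 3 ≤ 2*l1 + l4 - 3*l2 := by omega
      have ht1 : t ≤ 1 := by nlinarith
      have ht2 : -1 ≤ t := by nlinarith
      interval_cases t <;> omega
    · rintro (h | h | h)
      · exact ⟨-1, by linarith⟩
      · exact ⟨0, by linarith⟩
      · exact ⟨1, by linarith⟩
  rw [Finset.filter_congr hiff, Finset.filter_or, Finset.filter_or]
  have hd1 : Disjoint ((D ×ˢ D ×ˢ D).filter (fun l => 2*l.1 + l.2.2 - 3*l.2.1 = -(2*K+1)))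
      (((D ×ˢ D ×ˢ D).filter (fun l => 2*l.1 + l.2.2 - 3*l.2.1 = 0)) ∪
       ((D ×ˢ D ×ˢ D).filter (fun l => 2*l.1 + l.2.2 - 3*l.2.1 = 2*K+1))) := by
    rw [Finset.disjoint_union_right]
    constructor <;>
    · rw [Finset.disjoint_left]
      intro a ha hb
      simp only [mem_filter] at ha hb
      omega
  have hd2 : Disjoint ((D ×ˢ D ×ˢ D).filter (fun l => 2*l.1 + l.2.2 - 3*l.2.1 = 0))
      ((D ×ˢ D ×ˢ D).filter (fun l => 2*l.1 + l.2.2 - 3*l.2.1 = 2*K+1)) := by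
    rw [Finset.disjoint_left]
    intro a ha hb
    simp only [mem_filter] at ha hb
    omega
  rw [Finset.card_union_of_disjoint hd1, Finset.card_union_of_disjoint hd2]
  push_cast
  rw [Nt_eq K (-(2*K+1)), Nt_eq K 0, Nt_eq K (2*K+1)]
  rw [← Finset.sum_add_distrib, ← Finset.sum_add_distrib]
  have hcard : (D.card : ℤ) = K := by
    rw [hD, Int.card_Icc]
    omega
  constructor
  · rw [Finset.mul_sum]
    refine le_trans ?_ (Finset.sum_le_sum (f := fun _ => K - 4) (fun l2 hl2 => ?_))
    · rw [Finset.sum_const, nsmul_eq_mul, hcard]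
      nlinarith
    · simp only [hD, mem_Icc] at hl2
      have h := (perl2 K l2 hK hl2.1 hl2.2).1
      beta_reduce
      linarith
  · rw [Finset.mul_sum]
    refine le_trans (Finset.sum_le_sum (g := fun _ => K + 4) (fun l2 hl2 => ?_)) ?_
    · simp only [hD, mem_Icc] at hl2
      have h := (perl2 K l2 hK hl2.1 hl2.2).2
      beta_reduce
      linarith
    · rw [Finset.sum_const, nsmul_eq_mul, hcard]
      nlinarith

theorem count_triples_three_l2 :
    ∃ C : ℝ, 0 < C ∧ ∀ m : ℕ, 2 ≤ m → Odd m →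
      |((((Finset.Icc (((m : ℤ) + 1) / 2) ((m : ℤ) - 1)) ×ˢ
          (Finset.Icc (((m : ℤ) + 1) / 2) ((m : ℤ) - 1)) ×ˢ
          (Finset.Icc (((m : ℤ) + 1) / 2) ((m : ℤ) - 1))).filter
            (fun l => 3 * l.2.1 ≡ 2 * l.1 + l.2.2 [ZMOD m])).card : ℝ)
        - (m : ℝ) ^ 2 / 8| ≤ C * m := by
  refine ⟨3, by norm_num, fun m hm hodd => ?_⟩
  obtain ⟨k, hk⟩ := hodd
  set K : ℤ := (k : ℤ) with hKdef
  have hK : 1 ≤ K := by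
    rw [hKdef]
    exact_mod_cast (by omega : 1 ≤ k)
  have hmK : (m : ℤ) = 2*K + 1 := by
    rw [hKdef]; push_cast [hk]; ring
  have e1 : ((m : ℤ) + 1) / 2 = K + 1 := by rw [hmK]; omega
  have e2 : (m : ℤ) - 1 = 2*K := by rw [hmK]; ring
  rw [e1, e2]
  have hpred : ∀ l ∈ (Finset.Icc (K+1) (2*K)) ×ˢ (Finset.Icc (K+1) (2*K)) ×ˢ (Finset.Icc (K+1) (2*K)),
      (3 * l.2.1 ≡ 2 * l.1 + l.2.2 [ZMOD m]) ↔ ((2*K+1) ∣ (2*l.1 + l.2.2 - 3*l.2.1)) := by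
    intro l _
    rw [Int.modEq_iff_dvd, hmK]
  rw [Finset.filter_congr hpred]
  obtain ⟨h1, h2⟩ := aux_bounds K hK
  rw [abs_le]
  have hKR : (1:ℝ) ≤ (K:ℝ) := by exact_mod_cast hK
  have hmR : (m : ℝ) = 2*(K:ℝ) + 1 := by exact_mod_cast hmK
  have h1R : (K:ℝ)*(K:ℝ) - 4*(K:ℝ) ≤ 2*((((Finset.Icc (K+1) (2*K)) ×ˢ (Finset.Icc (K+1) (2*K)) ×ˢ (Finset.Icc (K+1) (2*K))).filter
        (fun l => (2*K+1) ∣ (2*l.1 + l.2.2 - 3*l.2.1))).card : ℝ) := by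
    exact_mod_cast h1
  have h2R : 2*((((Finset.Icc (K+1) (2*K)) ×ˢ (Finset.Icc (K+1) (2*K)) ×ˢ (Finset.Icc (K+1) (2*K))).filter
        (fun l => (2*K+1) ∣ (2*l.1 + l.2.2 - 3*l.2.1))).card : ℝ) ≤ (K:ℝ)*(K:ℝ) + 4*(K:ℝ) := by
    exact_mod_cast h2
  rw [hmR]
  constructor <;> nlinarith
end

section
/- Let m ≥ 2 be an odd integer. The number of quadruples (l1, l2, l3, l4) with (m+1)/2 ≤ l1, l2, l3, l4 ≤ m−1 satisfying both 2·l2 ≡ l1 + l3 (mod m) and 3·l2 ≡ 2·l1 + l4 (mod m) equals m²/12 + O(m), i.e., differs from m²/12 by at most C·m for an absolute constant C. -/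
/-!
On a box `(a, b]⁴` with `2 (b - a) < m`, both congruences compare quantities differing by less
than `m`, so they are equalities: `(l₁, l₂, l₃, l₄)` is a four-term arithmetic progression.
Such a progression is determined by its endpoints `l₁, l₄`, subject only to `l₁ ≡ l₄ (mod 3)`;
in an interval of length `N` there are `N² / 3 + O(N)` such pairs. For `m = 2N + 1` the box is
`(N, 2N]⁴`, and `N² / 3 = m² / 12 + O(m)`.
-/

open Finset

theorem Int.ModEq.eq_of_abs_sub_lt {m x y : ℤ} (h : x ≡ y [ZMOD m]) (hxy : |y - x| < m) :
    x = y :=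
  (sub_eq_zero.mp (Int.eq_zero_of_abs_lt_dvd (Int.modEq_iff_dvd.mp h) hxy)).symm

theorem filter_congruences_Ioc_eq_filter_ap {a b m : ℤ} (hm : 2 * (b - a) < m) :
    (Ioc a b ×ˢ Ioc a b ×ˢ Ioc a b ×ˢ Ioc a b).filter
        (fun l => 2 * l.2.1 ≡ l.1 + l.2.2.1 [ZMOD m] ∧ 3 * l.2.1 ≡ 2 * l.1 + l.2.2.2 [ZMOD m]) =
      (Ioc a b ×ˢ Ioc a b ×ˢ Ioc a b ×ˢ Ioc a b).filter
        (fun l => l.2.2.1 = 2 * l.2.1 - l.1 ∧ l.2.2.2 = 3 * l.2.1 - 2 * l.1) := by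
  refine filter_congr fun ⟨l₁, l₂, l₃, l₄⟩ hl => ?_
  simp only [mem_product, mem_Ioc] at hl
  dsimp only
  constructor
  · rintro ⟨h₃, h₄⟩
    -- `l₁ + l₃ - 2 l₂ = (l₃ - l₂) - (l₂ - l₁)` and, once `l₃ = 2 l₂ - l₁`,
    -- `2 l₁ + l₄ - 3 l₂ = (l₄ - l₃) - (l₂ - l₁)`: both are differences of two gaps in `(a, b]`.
    have e₃ := h₃.eq_of_abs_sub_lt (abs_sub_lt_iff.mpr ⟨by omega, by omega⟩)
    have e₄ := h₄.eq_of_abs_sub_lt (abs_sub_lt_iff.mpr ⟨by omega, by omega⟩)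
    omega
  · rintro ⟨rfl, rfl⟩
    exact ⟨by rw [add_sub_cancel], by rw [add_sub_cancel]⟩

theorem card_filter_ap_Ioc_eq_card_filter_modEq_three (a b : ℤ) :
    #((Ioc a b ×ˢ Ioc a b ×ˢ Ioc a b ×ˢ Ioc a b).filter
        (fun l => l.2.2.1 = 2 * l.2.1 - l.1 ∧ l.2.2.2 = 3 * l.2.1 - 2 * l.1)) =
      #{p ∈ Ioc a b ×ˢ Ioc a b | p.1 ≡ p.2 [ZMOD 3]} := by
  refine card_nbij' (fun l => (l.1, l.2.2.2))
    (fun p => (p.1, (2 * p.1 + p.2) / 3, (p.1 + 2 * p.2) / 3, p.2)) ?_ ?_ ?_ ?_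
  · rintro ⟨l₁, l₂, l₃, l₄⟩ hl
    simp only [mem_coe, mem_filter, mem_product, mem_Ioc] at hl ⊢
    unfold Int.ModEq
    omega
  · rintro ⟨x, y⟩ hp
    simp only [mem_coe, mem_filter, mem_product, mem_Ioc] at hp ⊢
    unfold Int.ModEq at hp
    omega
  · rintro ⟨l₁, l₂, l₃, l₄⟩ hl
    simp only [mem_coe, mem_filter, mem_product, mem_Ioc, Prod.mk.injEq, true_and, and_true] at hl ⊢
    omega
  · rintro ⟨x, y⟩ -
    rfl

theorem Int.abs_mul_card_Ioc_filter_modEq_sub_lt {a b r : ℤ} (hab : a ≤ b) (hr : 0 < r)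
    (v : ℤ) : |r * #{x ∈ Ioc a b | x ≡ v [ZMOD r]} - (b - a)| < r := by
  have hrQ : (0 : ℚ) < r := by exact_mod_cast hr
  have hquot_le : ((a : ℚ) - v) / r ≤ ((b : ℚ) - v) / r := by gcongr
  rw [Int.Ioc_filter_modEq_card a b hr v, max_eq_left (sub_nonneg.mpr (Int.floor_mono hquot_le))]
  have hb_le := Int.floor_le ((b - v) / (r : ℚ))
  have hb_lt := Int.lt_floor_add_one ((b - v) / (r : ℚ))
  have ha_le := Int.floor_le ((a - v) / (r : ℚ))
  have ha_lt := Int.lt_floor_add_one ((a - v) / (r : ℚ))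
  rw [le_div_iff₀ hrQ] at hb_le ha_le
  rw [div_lt_iff₀ hrQ] at hb_lt ha_lt
  rw [abs_sub_lt_iff]
  constructor
  · have : (r : ℚ) * (⌊(b - v) / (r : ℚ)⌋ - ⌊(a - v) / (r : ℚ)⌋) - (b - a) < r := by linarith
    exact_mod_cast this
  · have : ((b : ℚ) - a) - r * (⌊(b - v) / (r : ℚ)⌋ - ⌊(a - v) / (r : ℚ)⌋) < r := by linarith
    exact_mod_cast this

theorem Int.abs_mul_card_Ioc_sq_filter_modEq_sub_le {a b r : ℤ} (hab : a ≤ b) (hr : 0 < r) :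
    |r * #{p ∈ Ioc a b ×ˢ Ioc a b | p.1 ≡ p.2 [ZMOD r]} - (b - a) ^ 2| ≤ (b - a) * (r - 1) := by
  have hfiber : (#{p ∈ Ioc a b ×ˢ Ioc a b | p.1 ≡ p.2 [ZMOD r]} : ℤ) =
      ∑ x ∈ Ioc a b, (#{y ∈ Ioc a b | y ≡ x [ZMOD r]} : ℤ) := by
    rw [card_filter, sum_product]
    push_cast
    refine sum_congr rfl fun x _ => ?_
    rw [card_filter]
    push_cast
    exact sum_congr rfl fun y _ => by simp only [Int.modEq_comm]
  have hcard : ((#(Ioc a b) : ℕ) : ℤ) = b - a := by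
    rw [Int.card_Ioc]; omega
  calc |r * #{p ∈ Ioc a b ×ˢ Ioc a b | p.1 ≡ p.2 [ZMOD r]} - (b - a) ^ 2|
      = |∑ x ∈ Ioc a b, (r * #{y ∈ Ioc a b | y ≡ x [ZMOD r]} - (b - a))| := by
        rw [hfiber, sum_sub_distrib, ← mul_sum, sum_const, nsmul_eq_mul, hcard, sq]
    _ ≤ ∑ x ∈ Ioc a b, |r * #{y ∈ Ioc a b | y ≡ x [ZMOD r]} - (b - a)| := abs_sum_le_sum_abs _ _
    _ ≤ ∑ x ∈ Ioc a b, (r - 1) := sum_le_sum fun x _ =>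
        Int.le_sub_one_of_lt (Int.abs_mul_card_Ioc_filter_modEq_sub_lt hab hr x)
    _ = (b - a) * (r - 1) := by rw [sum_const, nsmul_eq_mul, hcard]

theorem count_quadruples_two_congruences :
    ∃ C : ℝ, 0 < C ∧ ∀ m : ℕ, 2 ≤ m → Odd m →
      |((((Finset.Icc (((m : ℤ) + 1) / 2) ((m : ℤ) - 1)) ×ˢ
          (Finset.Icc (((m : ℤ) + 1) / 2) ((m : ℤ) - 1)) ×ˢ
          (Finset.Icc (((m : ℤ) + 1) / 2) ((m : ℤ) - 1)) ×ˢ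
          (Finset.Icc (((m : ℤ) + 1) / 2) ((m : ℤ) - 1))).filter
            (fun l => 2 * l.2.1 ≡ l.1 + l.2.2.1 [ZMOD m] ∧
                      3 * l.2.1 ≡ 2 * l.1 + l.2.2.2 [ZMOD m])).card : ℝ)
        - (m : ℝ) ^ 2 / 12| ≤ C * m := by
  refine ⟨1, one_pos, fun m _ ⟨k, hk⟩ => ?_⟩
  have hbox : Icc (((m : ℤ) + 1) / 2) ((m : ℤ) - 1) = Ioc (k : ℤ) (k + k) := by
    rw [← Icc_add_one_left_eq_Ioc]
    congr 1 <;> omega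
  rw [hbox, filter_congruences_Ioc_eq_filter_ap (by omega),
    card_filter_ap_Ioc_eq_card_filter_modEq_three]
  have hpairs := Int.abs_mul_card_Ioc_sq_filter_modEq_sub_le
    (show (k : ℤ) ≤ k + k by omega) (show (0 : ℤ) < 3 by norm_num)
  rw [add_sub_cancel_left] at hpairs
  generalize #{p ∈ Ioc (k : ℤ) (k + k) ×ˢ Ioc (k : ℤ) (k + k) | p.1 ≡ p.2 [ZMOD 3]} = P at hpairs ⊢
  have hpairsR : |3 * (P : ℝ) - (k : ℝ) ^ 2| ≤ (k : ℝ) * (3 - 1) := by exact_mod_cast hpairs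
  rw [hk]
  push_cast
  rw [abs_le] at hpairsR ⊢
  constructor <;> linarith
end

section
/- Let m ≥ 2 be odd, k > 3 with k | m, and let χ be a Dirichlet character modulo km with χ^m trivial. If m | (a1 + a2 + a3 + a4) and k | (a2 + 2a3 + 3a4), then Σ_{t=0}^{km−1} χ(t^{a1} (t+m)^{a2} (t+2m)^{a3} (t+3m)^{a4}) = k·φ(m). -/
/-!
Because `k ∣ m`, the element `m` of `ℤ/kmℤ` squares to zero and is killed by `k`. So for a
unit `u`, `w = 1 + u⁻¹m` is a unit of order dividing `k` with `u + jm = u wʲ`, and the summand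
at `u` equals `χ(u)^(a₁+a₂+a₃+a₄) χ(w)^(a₂+2a₃+3a₄) = 1`. At non-units the summand vanishes, so
the sum counts units: `φ(km) = k φ(m)`.
-/

open Finset

theorem Nat.totient_mul_of_dvd {k m : ℕ} (h : k ∣ m) : (k * m).totient = k * m.totient := by
  rcases k.eq_zero_or_pos with rfl | hk
  · simp
  have := Nat.totient_gcd_mul_totient_mul k m
  rw [Nat.gcd_eq_left h] at this
  exact Nat.eq_of_mul_eq_mul_left (Nat.totient_pos.2 hk) (by linarith)

theorem ZMod.sum_range_natCast {M : Type*} [AddCommMonoid M] (n : ℕ) [NeZero n]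
    (f : ZMod n → M) : ∑ t ∈ range n, f t = ∑ x : ZMod n, f x :=
  Finset.sum_nbij' (↑) ZMod.val (fun _ _ ↦ mem_univ _) (fun x _ ↦ mem_range.2 x.val_lt)
    (fun _ ht ↦ ZMod.val_cast_of_lt (mem_range.1 ht)) (fun x _ ↦ ZMod.natCast_zmod_val x)
    (fun _ _ ↦ rfl)

theorem one_add_pow_of_mul_self_eq_zero {R : Type*} [CommRing R] {δ : R} (hδ : δ * δ = 0)
    (j : ℕ) : (1 + δ) ^ j = 1 + j * δ := by
  induction j with
  | zero => simp
  | succ j ih => rw [pow_succ, ih]; push_cast; linear_combination (j : R) * hδ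

theorem zpow_mul_shift_prod_eq_one {G : Type*} [CommGroup G] {A B : G} {n k : ℕ}
    (hA : A ^ n = 1) (hB : B ^ k = 1) {a1 a2 a3 a4 : ℤ} (h1 : (n : ℤ) ∣ a1 + a2 + a3 + a4)
    (h2 : (k : ℤ) ∣ a2 + 2 * a3 + 3 * a4) :
    A ^ a1 * (A * B) ^ a2 * (A * B ^ 2) ^ a3 * (A * B ^ 3) ^ a4 = 1 := by
  obtain ⟨q1, hq1⟩ := h1
  obtain ⟨q2, hq2⟩ := h2
  calc A ^ a1 * (A * B) ^ a2 * (A * B ^ 2) ^ a3 * (A * B ^ 3) ^ a4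
      = A ^ (a1 + a2 + a3 + a4) * B ^ (a2 + 2 * a3 + 3 * a4) := by
        simp only [mul_zpow, ← zpow_natCast, ← zpow_mul, zpow_add]
        push_cast
        simp only [mul_comm, mul_left_comm, mul_assoc]
    _ = 1 := by rw [hq1, hq2, zpow_mul, zpow_mul, zpow_natCast, zpow_natCast, hA, hB,
        one_zpow, one_zpow, one_mul]

namespace MulChar

variable {R R' : Type*} [CommRing R] [CommRing R']

theorem zpow_apply_coe_eq_mulEquivToUnitHom (χ : MulChar R R') (a : ℤ) (u : Rˣ) :
    (χ ^ a) u = (mulEquivToUnitHom χ u ^ a : R'ˣ) := by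
  change (mulEquivToUnitHom (χ ^ a) u : R') = _
  rw [map_zpow]
  rfl

theorem zpow_shift_prod_apply {χ : MulChar R R'} {n k : ℕ} (hχ : χ ^ n = 1) {ε : R}
    (hε : ε * ε = 0) (hkε : (k : R) * ε = 0) {a1 a2 a3 a4 : ℤ}
    (h1 : (n : ℤ) ∣ a1 + a2 + a3 + a4) (h2 : (k : ℤ) ∣ a2 + 2 * a3 + 3 * a4) (x : R) :
    (χ ^ a1) x * (χ ^ a2) (x + ε) * (χ ^ a3) (x + 2 * ε) * (χ ^ a4) (x + 3 * ε) =
      (1 : MulChar R R') x := by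
  rcases (em (IsUnit x)).symm with hx | ⟨u, rfl⟩
  · simp only [map_nonunit _ hx, zero_mul]
  have hδ : (↑u⁻¹ * ε) * (↑u⁻¹ * ε) = 0 := by linear_combination (↑u⁻¹ * ↑u⁻¹ : R) * hε
  obtain ⟨w, hw⟩ : IsUnit (1 + ↑u⁻¹ * ε) :=
    IsNilpotent.isUnit_one_add ⟨2, by rw [sq, hδ]⟩
  have hpow (j : ℕ) : ((w ^ j : Rˣ) : R) = 1 + j * (↑u⁻¹ * ε) := by
    rw [Units.val_pow_eq_pow_val, hw, one_add_pow_of_mul_self_eq_zero hδ]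
  have hshift (j : ℕ) : (u : R) + j * ε = (u * w ^ j : Rˣ) := by
    rw [Units.val_mul, hpow]
    linear_combination (-(j : R) * ε) * u.mul_inv
  have hwk : w ^ k = 1 := Units.ext <| by
    rw [hpow, Units.val_one]
    linear_combination (↑u⁻¹ : R) * hkε
  set ψ := mulEquivToUnitHom χ
  have hA : ψ u ^ n = 1 := Units.ext <| by
    rw [Units.val_pow_eq_pow_val, Units.val_one]
    exact (pow_apply_coe χ n u).symm.trans (by rw [hχ, one_apply_coe])
  have hB : ψ w ^ k = 1 := by rw [← map_pow, hwk, map_one]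
  have e1 : (u : R) + ε = (u * w ^ 1 : Rˣ) := by rw [← hshift, Nat.cast_one, one_mul]
  have e2 : (u : R) + 2 * ε = (u * w ^ 2 : Rˣ) := by rw [← hshift, Nat.cast_ofNat]
  have e3 : (u : R) + 3 * ε = (u * w ^ 3 : Rˣ) := by rw [← hshift, Nat.cast_ofNat]
  rw [e1, e2, e3, one_apply_coe]
  simp only [zpow_apply_coe_eq_mulEquivToUnitHom, map_mul, map_pow, pow_one, ← Units.val_mul]
  rw [zpow_mul_shift_prod_eq_one hA hB h1 h2, Units.val_one]

theorem sum_zpow_shift_prod [Fintype R] [DecidableEq R] {χ : MulChar R R'} {n k : ℕ}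
    (hχ : χ ^ n = 1) {ε : R} (hε : ε * ε = 0) (hkε : (k : R) * ε = 0) {a1 a2 a3 a4 : ℤ}
    (h1 : (n : ℤ) ∣ a1 + a2 + a3 + a4) (h2 : (k : ℤ) ∣ a2 + 2 * a3 + 3 * a4) :
    ∑ x, (χ ^ a1) x * (χ ^ a2) (x + ε) * (χ ^ a3) (x + 2 * ε) * (χ ^ a4) (x + 3 * ε) =
      Fintype.card Rˣ := by
  simp only [zpow_shift_prod_apply hχ hε hkε h1 h2, sum_one_eq_card_units]

end MulChar

theorem char_sum_main_term_general (m k : ℕ)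
    (hkm : k ∣ m) (χ : DirichletCharacter ℂ (k * m)) (hχ : χ ^ m = 1)
    (a1 a2 a3 a4 : ℤ) (hsum : (m : ℤ) ∣ (a1 + a2 + a3 + a4))
    (hsum' : (k : ℤ) ∣ (a2 + 2 * a3 + 3 * a4)) :
    ∑ t ∈ Finset.range (k * m),
      (χ ^ a1) (t : ZMod (k * m)) * (χ ^ a2) ((t : ZMod (k * m)) + (m : ZMod (k * m))) *
      (χ ^ a3) ((t : ZMod (k * m)) + 2 * (m : ZMod (k * m))) *
      (χ ^ a4) ((t : ZMod (k * m)) + 3 * (m : ZMod (k * m)))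
      = (k : ℂ) * (Nat.totient m : ℂ) := by
  rcases m.eq_zero_or_pos with rfl | hm
  · simp
  have : NeZero (k * m) := ⟨(Nat.mul_pos (Nat.pos_of_dvd_of_pos hkm hm) hm).ne'⟩
  have hmm : (m : ZMod (k * m)) * m = 0 := by
    exact_mod_cast (ZMod.natCast_eq_zero_iff _ _).2 (mul_dvd_mul_right hkm m)
  have hkm' : (k : ZMod (k * m)) * m = 0 := by exact_mod_cast ZMod.natCast_self (k * m)
  rw [ZMod.sum_range_natCast (k * m) fun x ↦
      (χ ^ a1) x * (χ ^ a2) (x + m) * (χ ^ a3) (x + 2 * m) * (χ ^ a4) (x + 3 * m),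
    MulChar.sum_zpow_shift_prod hχ hmm hkm' hsum hsum',
    ZMod.card_units_eq_totient, Nat.totient_mul_of_dvd hkm, Nat.cast_mul]

theorem char_sum_main_term (m k : ℕ) (hm : 2 ≤ m) (hodd : Odd m) (hk : 3 < k)
    (hkm : k ∣ m) (χ : DirichletCharacter ℂ (k * m)) (hχ : χ ^ m = 1)
    (a1 a2 a3 a4 : ℤ) (hsum : (m : ℤ) ∣ (a1 + a2 + a3 + a4))
    (hsum' : (k : ℤ) ∣ (a2 + 2 * a3 + 3 * a4)) :
    ∑ t ∈ Finset.range (k * m),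
      (χ ^ a1) (t : ZMod (k * m)) * (χ ^ a2) ((t : ZMod (k * m)) + (m : ZMod (k * m))) *
      (χ ^ a3) ((t : ZMod (k * m)) + 2 * (m : ZMod (k * m))) *
      (χ ^ a4) ((t : ZMod (k * m)) + 3 * (m : ZMod (k * m)))
      = (k : ℂ) * (Nat.totient m : ℂ) :=
  char_sum_main_term_general m k hkm χ hχ a1 a2 a3 a4 hsum hsum'
end
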